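/- Suppose m and n are integers with n ≥ 4 and 2 ≤ m ≤ n−2. A set of vertices A ⊆ V(C_n) with |A| = m is good if and only if there is a graph automorphism φ of C_n such that A = φ(B), where B = {0, 1, ..., ⌊m/2⌋ − 1} ∪ {⌊n/2⌋, ⌊n/2⌋ + 1, ..., ⌊n/2⌋ + ⌈m/2⌉ − 1} (a union of two arcs of C_n of sizes ⌊m/2⌋ and ⌈m/2⌉ placed antipodally). -/
import Mathlib


open SimpleGraph Finset

/-- The cycle graph on vertex set `ZMod n`, with an edge between `i` and `i+1` (mod `n`). -/
def cycleGraphZMod (n : ℕ) : SimpleGraph (ZMod n) :=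
  SimpleGraph.fromRel (fun u v => v = u + 1)

/-- The Wiener index of a set of vertices: the sum of all pairwise geodesic distances. -/
noncomputable def wienerSet {V : Type*} [Fintype V] [DecidableEq V]
    (G : SimpleGraph V) (A : Finset V) : ℕ :=
  (∑ p ∈ A.offDiag, G.dist p.1 p.2) / 2

/-- `A` is a maximizer of `W` on `G`. -/
def IsWienerMaximizer {V : Type*} [Fintype V] [DecidableEq V]
    (G : SimpleGraph V) (A : Finset V) : Prop :=
  ∀ B : Finset V, B.card = A.card → wienerSet G B ≤ wienerSet G A

/-- `A ⊆ V(C_n)` is almost good. -/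
def AlmostGood (n : ℕ) (A : Finset (ZMod n)) : Prop :=
  A.card = 1 ∨ A.card = n - 1 ∨
    ∃ c₁ c₂ : ((cycleGraphZMod n).induce (↑A : Set (ZMod n))).ConnectedComponent,
      c₁ ≠ c₂ ∧ (∀ c, c = c₁ ∨ c = c₂) ∧
      (c₁.supp.ncard : ℤ) - (c₂.supp.ncard : ℤ) ≤ 1 ∧
      (c₂.supp.ncard : ℤ) - (c₁.supp.ncard : ℤ) ≤ 1

/-- `A ⊆ V(C_n)` is good: both `A` and its complement are almost good. -/
def GoodSet (n : ℕ) [NeZero n] (A : Finset (ZMod n)) : Prop :=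
  AlmostGood n A ∧ AlmostGood n (Finset.univ \ A)

/-- The color class of color `i` for the coloring `f`. -/
def colorClass {V : Type*} [Fintype V] {k : ℕ} (f : V → Fin k) (i : Fin k) : Finset V :=
  Finset.univ.filter (fun v => f v = i)

/-- The Wiener index of a coloring: the sum of the Wiener indices of its color classes. -/
noncomputable def wienerColoring {V : Type*} [Fintype V] [DecidableEq V] {k : ℕ}
    (G : SimpleGraph V) (f : V → Fin k) : ℕ :=
  ∑ i : Fin k, wienerSet G (colorClass f i)

/-- The type of a coloring, as the multiset of cardinalities of its color classes
(equality of multisets is equality of the nondecreasing rearrangements). -/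
def colorType {V : Type*} [Fintype V] {k : ℕ} (f : V → Fin k) : Multiset ℕ :=
  (Finset.univ : Finset (Fin k)).val.map (fun i => (colorClass f i).card)

/-- `f` is a `k`-color weak maximizer of `W` on `G`. -/
def IsWeakMaximizer {V : Type*} [Fintype V] [DecidableEq V] {k : ℕ}
    (G : SimpleGraph V) (f : V → Fin k) : Prop :=
  Function.Surjective f ∧ ∀ g : V → Fin k, Function.Surjective g →
    colorType g = colorType f → wienerColoring G g ≤ wienerColoring G f

/-- The coloring obtained from `f` by swapping the colors of `u` and `v`. -/
def swapColors {V α : Type*} [DecidableEq V] (f : V → α) (u v : V) : V → α :=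
  f ∘ Equiv.swap u v

/-- `f` is a `k`-color local weak maximizer of `W` on `G`. -/
def IsLocalWeakMaximizer {V : Type*} [Fintype V] [DecidableEq V] {k : ℕ}
    (G : SimpleGraph V) (f : V → Fin k) : Prop :=
  Function.Surjective f ∧ ∀ u v : V, G.Adj u v →
    wienerColoring G (swapColors f u v) ≤ wienerColoring G f

/-- The number of vertices to the left of `u` in the path that get the same color as `u`. -/
def leftCount {n k : ℕ} (f : Fin n → Fin k) (u : Fin n) : ℕ :=
  (Finset.univ.filter (fun w => w < u ∧ f w = f u)).card

/-- The number of vertices to the right of `u` in the path that get the same color as `u`. -/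
def rightCount {n k : ℕ} (f : Fin n → Fin k) (u : Fin n) : ℕ :=
  (Finset.univ.filter (fun w => u < w ∧ f w = f u)).card

/-- The sum of the `j` largest entries of a multiset of naturals. -/
def sumLargest (s : Multiset ℕ) (j : ℕ) : ℕ :=
  (((s.sort (· ≤ ·)).reverse).take j).sum

/-- `x ≺ y` : `x` is majorized by `y`. -/
def MajorizedBy (x y : Multiset ℕ) : Prop :=
  x.card = y.card ∧ x.sum = y.sum ∧ ∀ j, sumLargest x j ≤ sumLargest y j

/-- The reverse Robin Hood transfer `R_{j,j'}` applied to the (sorted) list `t`,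
with `j ≤ j'` zero-indexed: subtract `1` from the `j`-th entry and add `1` to the `j'`-th
entry; the result is recorded as a multiset (i.e. up to rearrangement). -/
def rhTransfer (t : List ℕ) (j j' : ℕ) : Multiset ℕ :=
  ↑((t.set j (t.getD j 0 - 1)).set j' ((t.set j (t.getD j 0 - 1)).getD j' 0 + 1))

/-- `t(n,k)` : the unique nondecreasing `k`-tuple of positive integers summing to `n`
whose entries pairwise differ by at most one, as a multiset. -/
def equitableType (n k : ℕ) : Multiset ℕ :=
  Multiset.replicate (k - n % k) (n / k) + Multiset.replicate (n % k) (n / k + 1)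

/-- One step of the operation `R`: `s ∈ R({t})`, i.e. `s = t` or `s` is obtained from `t` by
a reverse Robin Hood transfer between two entries that are equal and even. -/
def REstep (t s : Multiset ℕ) : Prop :=
  s = t ∨ ∃ m : ℕ, Even m ∧ 2 ≤ t.count m ∧
    s = (t - Multiset.replicate 2 m) + {m - 1, m + 1}

/-- `s ∈ R^∞({t(n,k)})`. -/
def InRInfty (n k : ℕ) (s : Multiset ℕ) : Prop :=
  Relation.ReflTransGen REstep (equitableType n k) s


set_option linter.unusedSectionVars false

section AuxCycle
variable {n : ℕ} [NeZero n]

def arc (a : ZMod n) (l : ℕ) : Finset (ZMod n) :=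
  (Finset.range l).image (fun i : ℕ => a + (i : ZMod n))

lemma val_sub_cast (x : ZMod n) (c : ℕ) (hc : c ≤ n) :
    (x - (c : ZMod n)).val = if c ≤ x.val then x.val - c else x.val + n - c := by
  rcases Nat.eq_zero_or_pos c with hc0 | hc0
  · subst hc0; simp [ZMod.val_lt x |>.le]
  have h1 : (x - (c : ZMod n)) = x + ((n - c : ℕ) : ZMod n) := by
    have : ((c : ZMod n)) + ((n - c : ℕ) : ZMod n) = 0 := by
      rw [← Nat.cast_add]
      rw [Nat.add_sub_cancel' hc]
      exact ZMod.natCast_self n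
    rw [sub_eq_iff_eq_add]
    nth_rewrite 1 [← add_zero x]
    rw [← this]; ring
  rw [h1, ZMod.val_add, ZMod.val_cast_of_lt (by omega : n - c < n)]
  have hx := ZMod.val_lt x
  rcases le_or_gt c x.val with h | h
  · rw [if_pos h, Nat.mod_eq_sub_mod (by omega), Nat.mod_eq_of_lt (by omega)]
    omega
  · rw [if_neg (by omega), Nat.mod_eq_of_lt (by omega)]
    omega

lemma mem_arc {a x : ZMod n} {l : ℕ} (hl : l ≤ n) :
    x ∈ arc a l ↔ (x - a).val < l := by
  simp only [arc, Finset.mem_image, Finset.mem_range]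
  constructor
  · rintro ⟨i, hi, rfl⟩
    rw [add_sub_cancel_left, ZMod.val_cast_of_lt (by omega)]
    exact hi
  · intro h
    exact ⟨(x - a).val, h, by rw [ZMod.natCast_rightInverse (x - a)]; ring⟩

lemma mem_arc_shift {a x : ZMod n} {c l : ℕ} (h : c + l ≤ n) :
    x ∈ arc (a + (c : ZMod n)) l ↔ c ≤ (x - a).val ∧ (x - a).val < c + l := by
  rw [mem_arc (by omega)]
  have h1 : x - (a + (c : ZMod n)) = (x - a) - (c : ZMod n) := by ring
  rw [h1, val_sub_cast _ c (by omega)]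
  have := ZMod.val_lt (x - a)
  split_ifs with hc <;> omega

lemma card_arc (a : ZMod n) {l : ℕ} (hl : l ≤ n) : (arc a l).card = l := by
  rw [arc, Finset.card_image_of_injOn, Finset.card_range]
  intro i hi j hj hij
  simp only [Finset.mem_coe, Finset.mem_range] at hi hj
  have : (i : ZMod n) = (j : ZMod n) := by
    have := add_left_cancel hij
    exact this
  have := congrArg ZMod.val this
  rwa [ZMod.val_cast_of_lt (by omega), ZMod.val_cast_of_lt (by omega)] at this

lemma cyc_adj {u v : ZMod n} :
    (cycleGraphZMod n).Adj u v ↔ u ≠ v ∧ (v = u + 1 ∨ u = v + 1) := by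
  simp [cycleGraphZMod, SimpleGraph.fromRel_adj]


lemma zmod_one_ne_zero (hn : 2 ≤ n) : (1 : ZMod n) ≠ 0 := by
  intro h
  have : ((1 : ℕ) : ZMod n) = 0 := by exact_mod_cast h
  have := Nat.le_of_dvd one_pos ((CharP.cast_eq_zero_iff (ZMod n) n 1).mp this)
  omega

/-- forward reachability along the cycle inside `A`. -/
def Fwd (A : Finset (ZMod n)) (u v : ZMod n) : Prop :=
  ∃ k : ℕ, v = u + (k : ZMod n) ∧ ∀ j ≤ k, u + (j : ZMod n) ∈ A

lemma fwd_refl {A : Finset (ZMod n)} {u : ZMod n} (hu : u ∈ A) : Fwd A u u :=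
  ⟨0, by simp, fun j hj => by interval_cases j; simpa using hu⟩

lemma induce_adj' {A : Finset (ZMod n)} {x y : (↑A : Set (ZMod n))} :
    ((cycleGraphZMod n).induce (↑A : Set (ZMod n))).Adj x y ↔ (cycleGraphZMod n).Adj x.1 y.1 := Iff.rfl

lemma fwd_reachable (hn : 2 ≤ n) {A : Finset (ZMod n)} {u v : ZMod n}
    (h : Fwd A u v) (hu : u ∈ A) (hv : v ∈ A) :
    ((cycleGraphZMod n).induce (↑A : Set (ZMod n))).Reachable
      ⟨u, Finset.mem_coe.mpr hu⟩ ⟨v, Finset.mem_coe.mpr hv⟩ := by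
  obtain ⟨k, hk, hmem⟩ := h
  induction k generalizing v with
  | zero => simp only [Nat.cast_zero, add_zero] at hk; subst hk; rfl
  | succ k ih =>
    have hkA : u + (k : ZMod n) ∈ A := hmem k (by omega)
    have h1 : ((cycleGraphZMod n).induce (↑A : Set (ZMod n))).Reachable
        ⟨u, Finset.mem_coe.mpr hu⟩ ⟨u + (k : ZMod n), Finset.mem_coe.mpr hkA⟩ :=
      ih hkA rfl (fun j hj => hmem j (by omega))
    refine h1.trans (SimpleGraph.Adj.reachable ?_)
    rw [induce_adj', cyc_adj]
    refine ⟨?_, ?_⟩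
    · intro hcon
      have h2 : ((k : ℕ) : ZMod n) = ((k+1 : ℕ) : ZMod n) := add_left_cancel (hcon.trans hk)
      push_cast at h2
      exact zmod_one_ne_zero hn (by linear_combination -h2)
    · left; subst hk; push_cast; ring

lemma cast_pred {k : ℕ} (hk : 1 ≤ k) : ((k - 1 : ℕ) : ZMod n) = (k : ZMod n) - 1 := by
  rw [Nat.cast_sub hk, Nat.cast_one]

lemma walk_fwd {A : Finset (ZMod n)} :
    ∀ (x y : (↑A : Set (ZMod n))), ((cycleGraphZMod n).induce (↑A : Set (ZMod n))).Walk x y →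
      Fwd A x.1 y.1 ∨ Fwd A y.1 x.1 := by
  intro x y w
  induction w with
  | @nil z => exact Or.inl (fwd_refl (Finset.mem_coe.mp z.2))
  | @cons u b y' hadj p ih =>
    rw [induce_adj', cyc_adj] at hadj
    obtain ⟨hne, hb | hu⟩ := hadj
    · -- b.1 = u.1 + 1
      rcases ih with ⟨k, hk, hmem⟩ | ⟨k, hk, hmem⟩
      · left
        refine ⟨k + 1, by rw [hk, hb]; push_cast; ring, ?_⟩
        intro j hj
        rcases Nat.eq_zero_or_pos j with rfl | hj0
        · simpa using Finset.mem_coe.mp u.2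
        · have h2 := hmem (j - 1) (by omega)
          have hcast : (u.1 : ZMod n) + (j : ZMod n) = b.1 + ((j - 1 : ℕ) : ZMod n) := by
            rw [hb, cast_pred hj0]; ring
          rwa [hcast]
      · rcases Nat.eq_zero_or_pos k with rfl | hk0
        · left
          simp only [Nat.cast_zero, add_zero] at hk
          refine ⟨1, by rw [← hk, hb]; push_cast; ring, ?_⟩
          intro j hj
          interval_cases j
          · simpa using Finset.mem_coe.mp u.2
          · have h3 : u.1 + ((1:ℕ) : ZMod n) = b.1 := by rw [hb]; push_cast; ring
            rw [h3]; exact Finset.mem_coe.mp b.2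
        · right
          refine ⟨k - 1, ?_, fun j hj => hmem j (by omega)⟩
          have h4 : u.1 = b.1 - 1 := by rw [hb]; ring
          rw [h4, hk, cast_pred hk0]; ring
    · -- u.1 = b.1 + 1
      rcases ih with ⟨k, hk, hmem⟩ | ⟨k, hk, hmem⟩
      · rcases Nat.eq_zero_or_pos k with rfl | hk0
        · right
          simp only [Nat.cast_zero, add_zero] at hk
          refine ⟨1, by rw [hu, hk]; push_cast; ring, ?_⟩
          intro j hj
          interval_cases j
          · simpa using Finset.mem_coe.mp y'.2
          · have h5 : y'.1 + ((1:ℕ) : ZMod n) = u.1 := by rw [hu, hk]; push_cast; ring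
            rw [h5]; exact Finset.mem_coe.mp u.2
        · left
          refine ⟨k - 1, by rw [hk, hu, cast_pred hk0]; ring, ?_⟩
          intro j hj
          have h6 := hmem (j + 1) (by omega)
          have hcast : u.1 + (j : ZMod n) = b.1 + ((j + 1 : ℕ) : ZMod n) := by
            rw [hu]; push_cast; ring
          rwa [hcast]
      · right
        refine ⟨k + 1, by rw [hu, hk]; push_cast; ring, ?_⟩
        intro j hj
        rcases Nat.lt_or_ge j (k+1) with hj2 | hj2
        · exact hmem j (by omega)
        · have hj3 : j = k + 1 := by omega
          subst hj3
          have h7 : y'.1 + ((k+1 : ℕ) : ZMod n) = u.1 := by rw [hu, hk]; push_cast; ring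
          rw [h7]; exact Finset.mem_coe.mp u.2

lemma reachable_iff (hn : 2 ≤ n) {A : Finset (ZMod n)} {u v : ZMod n} (hu : u ∈ A) (hv : v ∈ A) :
    ((cycleGraphZMod n).induce (↑A : Set (ZMod n))).Reachable
      ⟨u, Finset.mem_coe.mpr hu⟩ ⟨v, Finset.mem_coe.mpr hv⟩ ↔
      Fwd A u v ∨ Fwd A v u := by
  constructor
  · intro h; obtain ⟨w⟩ := h; exact walk_fwd _ _ w
  · rintro (h | h)
    · exact fwd_reachable hn h hu hv
    · exact (fwd_reachable hn h hv hu).symm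

lemma wval_add (z : ZMod n) (t : ℕ) (ht : z.val + t < n) : (z + (t : ZMod n)).val = z.val + t := by
  rw [ZMod.val_add, ZMod.val_cast_of_lt (by omega), Nat.mod_eq_of_lt (by omega)]

lemma coord (a x : ZMod n) : x = a + (((x - a).val : ℕ) : ZMod n) := by
  rw [ZMod.natCast_rightInverse (x - a)]; ring

lemma cast_inj_of_lt {s t : ℕ} (hs : s < n) (ht : t < n)
    (h : (s : ZMod n) = (t : ZMod n)) : s = t := by
  have := congrArg ZMod.val h
  rwa [ZMod.val_cast_of_lt hs, ZMod.val_cast_of_lt ht] at this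

lemma cast_eq_zero_lt {t : ℕ} (ht : t < n) (h : (t : ZMod n) = 0) : t = 0 := by
  rcases Nat.eq_zero_or_pos t with rfl | h0
  · rfl
  · have := Nat.le_of_dvd h0 ((CharP.cast_eq_zero_iff (ZMod n) n t).mp h)
    omega


section TwoArc
variable {n : ℕ} [NeZero n] {A : Finset (ZMod n)} {a : ZMod n} {p g q h : ℕ}
  (hp : 1 ≤ p) (hg : 1 ≤ g) (hq : 1 ≤ q) (hh : 1 ≤ h)
  (hsum : p + g + q + h = n)
  (hA : A = arc a p ∪ arc (a + ((p + g : ℕ) : ZMod n)) q)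

include hp hg hq hh hsum hA

lemma memA {x : ZMod n} :
    x ∈ A ↔ ((x - a).val < p ∨ (p + g ≤ (x - a).val ∧ (x - a).val < p + g + q)) := by
  subst hA
  rw [Finset.mem_union, mem_arc (by omega), mem_arc_shift (by omega)]

lemma two_arc_components :
    ∃ c₁ c₂ : ((cycleGraphZMod n).induce (↑A : Set (ZMod n))).ConnectedComponent,
      c₁ ≠ c₂ ∧ (∀ c, c = c₁ ∨ c = c₂) ∧
      c₁.supp.ncard = p ∧ c₂.supp.ncard = q := by
  have hn : 2 ≤ n := by omega
  have hmemA : ∀ x : ZMod n,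
      x ∈ A ↔ ((x - a).val < p ∨ (p + g ≤ (x - a).val ∧ (x - a).val < p + g + q)) :=
    fun x => memA hp hg hq hh hsum hA
  set b : ZMod n := a + ((p + g : ℕ) : ZMod n) with hb
  -- basic membership facts
  have hmem' : ∀ t : ℕ, t < n → (t < p ∨ (p + g ≤ t ∧ t < p + g + q)) → a + (t : ZMod n) ∈ A := by
    intro t ht hcase
    rw [hmemA, add_sub_cancel_left, ZMod.val_cast_of_lt ht]
    exact hcase
  have hnotmem : ∀ t : ℕ, t < n → ((p ≤ t ∧ t < p + g) ∨ p + g + q ≤ t) → a + (t : ZMod n) ∉ A := by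
    intro t ht hcase
    rw [hmemA, add_sub_cancel_left, ZMod.val_cast_of_lt ht]
    omega
  have haA : a ∈ A := by
    have := hmem' 0 (by omega) (by omega); simpa using this
  have hbA : b ∈ A := hmem' (p + g) (by omega) (by omega)
  have hbcoord : ∀ t : ℕ, b + (t : ZMod n) = a + ((p + g + t : ℕ) : ZMod n) := by
    intro t; rw [hb]; push_cast; ring
  -- bounds on forward runs
  have C1 : ∀ k : ℕ, (∀ j ≤ k, a + (j : ZMod n) ∈ A) → k < p := by
    intro k hk
    by_contra hcon
    exact hnotmem p (by omega) (by omega) (hk p (by omega))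
  have C2 : ∀ k : ℕ, (∀ j ≤ k, b + (j : ZMod n) ∈ A) → k < q := by
    intro k hk
    by_contra hcon
    have := hk q (by omega)
    rw [hbcoord] at this
    exact hnotmem (p + g + q) (by omega) (by omega) this
  -- characterization of reachability to a and to b
  have RA : ∀ x : ZMod n, x ∈ A → ((Fwd A a x ∨ Fwd A x a) ↔ (x - a).val < p) := by
    intro x hx
    constructor
    · rintro (⟨k, hk, hmem⟩ | ⟨k, hk, hmem⟩)
      · have hkp := C1 k hmem
        rw [hk, add_sub_cancel_left, ZMod.val_cast_of_lt (by omega)]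
        omega
      · -- Fwd x a
        rcases (hmemA x).mp hx with hc | hc
        · exact hc
        · exfalso
          have hxc := coord a x
          set w := (x - a).val with hw
          rcases le_or_gt (p + g + q - w) k with hj | hj
          · have := hmem (p + g + q - w) hj
            rw [hxc] at this
            rw [show a + ((w : ℕ) : ZMod n) + (((p + g + q - w : ℕ)) : ZMod n)
                = a + ((p + g + q : ℕ) : ZMod n) by push_cast [Nat.cast_sub (by omega : w ≤ p + g + q)]; ring] at this
            exact hnotmem (p + g + q) (by omega) (by omega) this
          · -- a = x + k with w + k < p+g+q
            rw [hxc] at hk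
            have : a + (((w + k : ℕ)) : ZMod n) = a + ((0 : ℕ) : ZMod n) := by
              push_cast at hk ⊢
              linear_combination -hk
            have := cast_inj_of_lt (by omega) (by omega) (add_left_cancel this)
            omega
    · intro hxp
      left
      refine ⟨(x - a).val, coord a x, ?_⟩
      intro j hj
      exact hmem' j (by omega) (by omega)
  have RB : ∀ x : ZMod n, x ∈ A →
      ((Fwd A b x ∨ Fwd A x b) ↔ (p + g ≤ (x - a).val ∧ (x - a).val < p + g + q)) := by
    intro x hx
    constructor
    · rintro (⟨k, hk, hmem⟩ | ⟨k, hk, hmem⟩)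
      · have hkq := C2 k hmem
        rw [hk, hbcoord, add_sub_cancel_left, ZMod.val_cast_of_lt (by omega)]
        omega
      · -- Fwd x b
        rcases (hmemA x).mp hx with hc | hc
        · exfalso
          have hxc := coord a x
          set w := (x - a).val with hw
          rcases le_or_gt (p - w) k with hj | hj
          · have := hmem (p - w) hj
            rw [hxc] at this
            rw [show a + ((w : ℕ) : ZMod n) + (((p - w : ℕ)) : ZMod n)
                = a + ((p : ℕ) : ZMod n) by push_cast [Nat.cast_sub (by omega : w ≤ p)]; ring] at this
            exact hnotmem p (by omega) (by omega) this
          · rw [hxc] at hk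
            have : a + (((w + k : ℕ)) : ZMod n) = a + ((p + g : ℕ) : ZMod n) := by
              have hb' := hb
              push_cast at hk hb' ⊢
              linear_combination hb' - hk
            have := cast_inj_of_lt (by omega) (by omega) (add_left_cancel this)
            omega
        · exact hc
    · intro hxp
      left
      refine ⟨(x - a).val - (p + g), ?_, ?_⟩
      · rw [hbcoord, show p + g + ((x - a).val - (p + g)) = (x - a).val by omega]
        exact coord a x
      · intro j hj
        rw [hbcoord]
        exact hmem' (p + g + j) (by omega) (by omega)
  -- not reachable between a and b
  have hab : ¬ (Fwd A a b ∨ Fwd A b a) := by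
    rw [RA b hbA, hb, add_sub_cancel_left, ZMod.val_cast_of_lt (by omega)]
    omega
  -- now build the components
  set G' := (cycleGraphZMod n).induce (↑A : Set (ZMod n)) with hG'
  set c₁ := G'.connectedComponentMk ⟨a, Finset.mem_coe.mpr haA⟩ with hc₁
  set c₂ := G'.connectedComponentMk ⟨b, Finset.mem_coe.mpr hbA⟩ with hc₂
  have hmk : ∀ (x : ZMod n) (hx : x ∈ A),
      (G'.connectedComponentMk ⟨x, Finset.mem_coe.mpr hx⟩ = c₁ ↔ (x - a).val < p) := by
    intro x hx
    rw [hc₁, SimpleGraph.ConnectedComponent.eq]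
    rw [reachable_iff hn hx haA]
    constructor
    · intro hr; exact (RA x hx).mp (Or.symm hr)
    · intro hr; exact Or.symm ((RA x hx).mpr hr)
  have hmk2 : ∀ (x : ZMod n) (hx : x ∈ A),
      (G'.connectedComponentMk ⟨x, Finset.mem_coe.mpr hx⟩ = c₂ ↔
        (p + g ≤ (x - a).val ∧ (x - a).val < p + g + q)) := by
    intro x hx
    rw [hc₂, SimpleGraph.ConnectedComponent.eq]
    rw [reachable_iff hn hx hbA]
    constructor
    · intro hr; exact (RB x hx).mp (Or.symm hr)
    · intro hr; exact Or.symm ((RB x hx).mpr hr)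
  refine ⟨c₁, c₂, ?_, ?_, ?_, ?_⟩
  · intro hcon
    have := (hmk2 a haA).mp (hcon ▸ (hmk a haA).mpr (by rw [sub_self, ZMod.val_zero]; omega))
    simp only [sub_self, ZMod.val_zero] at this
    omega
  · intro c
    obtain ⟨⟨x, hx⟩, rfl⟩ := c.exists_rep
    have hx' : x ∈ A := Finset.mem_coe.mp hx
    rcases (hmemA x).mp hx' with hc | hc
    · left; exact (hmk x hx').mpr hc
    · right; exact (hmk2 x hx').mpr hc
  · -- ncard of c₁.supp
    have himg : Subtype.val '' c₁.supp = (↑(arc a p) : Set (ZMod n)) := by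
      ext y
      simp only [Set.mem_image, SimpleGraph.ConnectedComponent.mem_supp_iff]
      constructor
      · rintro ⟨⟨y', hy'⟩, hy2, rfl⟩
        rw [Finset.mem_coe, mem_arc (by omega)]
        exact (hmk y' (Finset.mem_coe.mp hy')).mp hy2
      · intro hy
        rw [Finset.mem_coe, mem_arc (by omega)] at hy
        have hyA : y ∈ A := (hmemA y).mpr (Or.inl hy)
        exact ⟨⟨y, Finset.mem_coe.mpr hyA⟩, (hmk y hyA).mpr hy, rfl⟩
    have := Set.ncard_image_of_injective c₁.supp Subtype.val_injective
    rw [himg, Set.ncard_coe_finset] at this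
    rw [← this, card_arc a (by omega)]
  · have himg : Subtype.val '' c₂.supp = (↑(arc b q) : Set (ZMod n)) := by
      ext y
      simp only [Set.mem_image, SimpleGraph.ConnectedComponent.mem_supp_iff]
      constructor
      · rintro ⟨⟨y', hy'⟩, hy2, rfl⟩
        rw [Finset.mem_coe, hb, mem_arc_shift (by omega)]
        exact (hmk2 y' (Finset.mem_coe.mp hy')).mp hy2
      · intro hy
        rw [Finset.mem_coe, hb, mem_arc_shift (by omega)] at hy
        have hyA : y ∈ A := (hmemA y).mpr (Or.inr hy)
        exact ⟨⟨y, Finset.mem_coe.mpr hyA⟩, (hmk2 y hyA).mpr hy, rfl⟩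
    have := Set.ncard_image_of_injective c₂.supp Subtype.val_injective
    rw [himg, Set.ncard_coe_finset] at this
    rw [← this, card_arc b (by omega)]

end TwoArc


/-- every connected component of the induced graph on a proper subset is an arc -/
lemma comp_arc (hn : 2 ≤ n) {A : Finset (ZMod n)} (hproper : A ≠ Finset.univ)
    (c : ((cycleGraphZMod n).induce (↑A : Set (ZMod n))).ConnectedComponent) :
    ∃ (a : ZMod n) (l : ℕ), 1 ≤ l ∧ l ≤ n - 1 ∧ a ∈ A ∧ a - 1 ∉ A ∧
      a + (l : ZMod n) ∉ A ∧ Subtype.val '' c.supp = (↑(arc a l) : Set (ZMod n)) := by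
  classical
  obtain ⟨⟨x, hx⟩, rfl⟩ := c.exists_rep
  have hx' : x ∈ A := Finset.mem_coe.mp hx
  obtain ⟨y, hy⟩ : ∃ y, y ∉ A := by
    by_contra hcon
    push_neg at hcon
    exact hproper (Finset.eq_univ_iff_forall.mpr hcon)
  -- find left endpoint
  have hex : ∃ j : ℕ, x - (((j+1) : ℕ) : ZMod n) ∉ A := by
    refine ⟨(x - y).val - 1, ?_⟩
    have h1 : 1 ≤ (x - y).val := by
      rcases Nat.eq_zero_or_pos (x - y).val with h0 | h0
      · exfalso
        have : x = y := by
          have := coord y x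
          rw [h0] at this
          simpa using this
        exact hy (this ▸ hx')
      · omega
    rw [show (x - y).val - 1 + 1 = (x - y).val by omega]
    have h2 : x - (((x - y).val : ℕ) : ZMod n) = y := by
      linear_combination (coord y x)
    rwa [h2]
  set k := Nat.find hex with hkdef
  have hk : x - ((k+1 : ℕ) : ZMod n) ∉ A := Nat.find_spec hex
  have hmin : ∀ j < k, x - ((j+1 : ℕ) : ZMod n) ∈ A := by
    intro j hj
    by_contra hcon
    have := Nat.find_min' hex hcon
    omega
  have hleft : ∀ j ≤ k, x - (j : ZMod n) ∈ A := by
    intro j hj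
    rcases Nat.eq_zero_or_pos j with rfl | hj0
    · simpa using hx'
    · have := hmin (j-1) (by omega)
      rwa [show (j - 1 + 1 : ℕ) = j by omega] at this
  set a := x - (k : ZMod n) with ha
  have haA : a ∈ A := hleft k le_rfl
  have ha1 : a - 1 ∉ A := by
    have : a - 1 = x - ((k+1 : ℕ) : ZMod n) := by rw [ha]; push_cast; ring
    rwa [this]
  have hfax : Fwd A a x := by
    refine ⟨k, by rw [ha]; ring, ?_⟩
    intro j hj
    have : a + (j : ZMod n) = x - ((k - j : ℕ) : ZMod n) := by
      rw [ha, Nat.cast_sub hj]; ring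
    rw [this]
    exact hleft (k - j) (by omega)
  -- find run length
  have hex2 : ∃ t : ℕ, a + (t : ZMod n) ∉ A := by
    refine ⟨(y - a).val, ?_⟩
    rw [← coord a y]; exact hy
  set l := Nat.find hex2 with hldef
  have hl : a + (l : ZMod n) ∉ A := Nat.find_spec hex2
  have hlmin : ∀ j < l, a + (j : ZMod n) ∈ A := by
    intro j hj
    by_contra hcon
    have := Nat.find_min' hex2 hcon
    omega
  have hl1 : 1 ≤ l := by
    rcases Nat.eq_zero_or_pos l with h0 | h0
    · exfalso; apply hl; rw [h0]; simpa using haA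
    · omega
  have hln : l ≤ n - 1 := by
    have : a + ((n - 1 : ℕ) : ZMod n) ∉ A := by
      have he : a + ((n - 1 : ℕ) : ZMod n) = a - 1 := by
        rw [Nat.cast_sub (by omega : 1 ≤ n)]
        rw [ZMod.natCast_self]
        push_cast; ring
      rwa [he]
    have := Nat.find_min' hex2 this
    omega
  refine ⟨a, l, hl1, hln, haA, ha1, hl, ?_⟩
  -- supp = arc a l
  have hreach : ∀ z (hz : z ∈ A), ((Fwd A a z ∨ Fwd A z a) ↔ z ∈ arc a l) := by
    intro z hz
    constructor
    · rintro (⟨k', hk', hmem⟩ | ⟨k', hk', hmem⟩)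
      · have hk'l : k' < l := by
          by_contra hcon
          exact hl (by
            have := hmem l (by omega)
            exact this)
        rw [mem_arc (by omega), hk', add_sub_cancel_left, ZMod.val_cast_of_lt (by omega)]
        exact hk'l
      · rcases Nat.eq_zero_or_pos k' with rfl | hk0
        · simp only [Nat.cast_zero, add_zero] at hk'
          rw [mem_arc (by omega), ← hk', sub_self, ZMod.val_zero]
          omega
        · exfalso
          apply ha1
          have : a - 1 = z + ((k' - 1 : ℕ) : ZMod n) := by
            rw [hk', Nat.cast_sub hk0]; push_cast; ring
          rw [this]
          exact hmem (k' - 1) (by omega)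
    · intro hz2
      left
      rw [mem_arc (by omega)] at hz2
      refine ⟨(z - a).val, coord a z, fun j hj => hlmin j (by omega)⟩
  have hmk : ∀ (z : ZMod n) (hz : z ∈ A),
      (((cycleGraphZMod n).induce (↑A : Set (ZMod n))).connectedComponentMk
        ⟨z, Finset.mem_coe.mpr hz⟩ =
        ((cycleGraphZMod n).induce (↑A : Set (ZMod n))).connectedComponentMk ⟨x, hx⟩ ↔
        z ∈ arc a l) := by
    intro z hz
    rw [SimpleGraph.ConnectedComponent.eq]
    have hxa : ((cycleGraphZMod n).induce (↑A : Set (ZMod n))).Reachable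
        ⟨x, hx⟩ ⟨a, Finset.mem_coe.mpr haA⟩ := by
      rw [reachable_iff hn hx' haA]
      right; exact hfax
    constructor
    · intro hr
      have := hr.trans hxa
      rw [reachable_iff hn hz haA] at this
      exact (hreach z hz).mp (Or.symm this)
    · intro hr
      have := (hreach z hz).mpr hr
      have h2 : ((cycleGraphZMod n).induce (↑A : Set (ZMod n))).Reachable
          ⟨z, Finset.mem_coe.mpr hz⟩ ⟨a, Finset.mem_coe.mpr haA⟩ :=
        (reachable_iff hn hz haA).mpr ((or_comm).mp this)
      exact h2.trans hxa.symm
  ext z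
  simp only [Set.mem_image, SimpleGraph.ConnectedComponent.mem_supp_iff]
  constructor
  · rintro ⟨⟨z', hz'⟩, hz2, rfl⟩
    exact Finset.mem_coe.mpr ((hmk z' (Finset.mem_coe.mp hz')).mp hz2)
  · intro hz
    rw [Finset.mem_coe] at hz
    have hzl := hz
    rw [mem_arc (by omega)] at hzl
    have hzA : z ∈ A := by
      have := hlmin (z - a).val (by omega)
      rwa [← coord a z] at this
    exact ⟨⟨z, Finset.mem_coe.mpr hzA⟩, (hmk z hzA).mpr hz, rfl⟩

lemma compl_two_arc {A : Finset (ZMod n)} {a : ZMod n} {p g q h : ℕ}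
    (hp : 1 ≤ p) (hg : 1 ≤ g) (hq : 1 ≤ q) (hh : 1 ≤ h)
    (hsum : p + g + q + h = n)
    (hA : A = arc a p ∪ arc (a + ((p + g : ℕ) : ZMod n)) q) :
    Finset.univ \ A =
      arc (a + ((p : ℕ) : ZMod n)) g ∪
      arc ((a + ((p : ℕ) : ZMod n)) + ((g + q : ℕ) : ZMod n)) h := by
  have hanchor : (a + ((p : ℕ) : ZMod n)) + ((g + q : ℕ) : ZMod n)
      = a + (((p + g + q : ℕ)) : ZMod n) := by push_cast; ring
  ext x
  rw [Finset.mem_sdiff, memA hp hg hq hh hsum hA, Finset.mem_union, hanchor,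
    mem_arc_shift (by omega), mem_arc_shift (by omega)]
  have := ZMod.val_lt (x - a)
  simp only [Finset.mem_univ, true_and]
  omega

lemma good_structure (hn : 4 ≤ n) {A : Finset (ZMod n)} {m : ℕ} (hm2 : 2 ≤ m)
    (hmn : m ≤ n - 2) (hcard : A.card = m) (hgood : GoodSet n A) :
    ∃ (a : ZMod n) (p g q h : ℕ), 1 ≤ p ∧ 1 ≤ g ∧ 1 ≤ q ∧ 1 ≤ h ∧ p + g + q + h = n ∧
      A = arc a p ∪ arc (a + ((p + g : ℕ) : ZMod n)) q ∧ p + q = m ∧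
      (p : ℤ) - q ≤ 1 ∧ (q : ℤ) - p ≤ 1 ∧ (g : ℤ) - h ≤ 1 ∧ (h : ℤ) - g ≤ 1 := by
  obtain ⟨hgA, hgC⟩ := hgood
  have hn2 : 2 ≤ n := by omega
  have hcards : (Finset.univ : Finset (ZMod n)).card = n := by
    rw [Finset.card_univ, ZMod.card]
  have hproper : A ≠ Finset.univ := by
    intro hcon
    rw [hcon, hcards] at hcard
    omega
  rcases hgA with h1 | h1 | ⟨c₁, c₂, hcne, hall, hsz1, hsz2⟩
  · omega
  · omega
  obtain ⟨a, p, hp1, hpn, haA, ha1, hap, hsupp1⟩ := comp_arc hn2 hproper c₁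
  obtain ⟨a₂, q, hq1, hqn, ha2A, ha21, ha2q, hsupp2⟩ := comp_arc hn2 hproper c₂
  have hmem1 : ∀ z : ZMod n, z ∈ arc a p → ∃ hz : z ∈ A,
      ((cycleGraphZMod n).induce (↑A : Set (ZMod n))).connectedComponentMk ⟨z, Finset.mem_coe.mpr hz⟩ = c₁ := by
    intro z hz
    have h2 : z ∈ Subtype.val '' c₁.supp := by rw [hsupp1]; exact Finset.mem_coe.mpr hz
    obtain ⟨⟨z', hz'⟩, hz2, rfl⟩ := h2
    exact ⟨Finset.mem_coe.mp hz', hz2⟩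
  have hmem2 : ∀ z : ZMod n, z ∈ arc a₂ q → ∃ hz : z ∈ A,
      ((cycleGraphZMod n).induce (↑A : Set (ZMod n))).connectedComponentMk ⟨z, Finset.mem_coe.mpr hz⟩ = c₂ := by
    intro z hz
    have h2 : z ∈ Subtype.val '' c₂.supp := by rw [hsupp2]; exact Finset.mem_coe.mpr hz
    obtain ⟨⟨z', hz'⟩, hz2, rfl⟩ := h2
    exact ⟨Finset.mem_coe.mp hz', hz2⟩
  have hrev1 : ∀ (z : ZMod n) (hz : z ∈ A),
      ((cycleGraphZMod n).induce (↑A : Set (ZMod n))).connectedComponentMk ⟨z, Finset.mem_coe.mpr hz⟩ = c₁ → z ∈ arc a p := by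
    intro z hz h2
    have : z ∈ Subtype.val '' c₁.supp := ⟨⟨z, Finset.mem_coe.mpr hz⟩, h2, rfl⟩
    rw [hsupp1] at this
    exact Finset.mem_coe.mp this
  have hrev2 : ∀ (z : ZMod n) (hz : z ∈ A),
      ((cycleGraphZMod n).induce (↑A : Set (ZMod n))).connectedComponentMk ⟨z, Finset.mem_coe.mpr hz⟩ = c₂ → z ∈ arc a₂ q := by
    intro z hz h2
    have : z ∈ Subtype.val '' c₂.supp := ⟨⟨z, Finset.mem_coe.mpr hz⟩, h2, rfl⟩
    rw [hsupp2] at this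
    exact Finset.mem_coe.mp this
  have hAeq : A = arc a p ∪ arc a₂ q := by
    ext z
    rw [Finset.mem_union]
    constructor
    · intro hz
      rcases hall (((cycleGraphZMod n).induce (↑A : Set (ZMod n))).connectedComponentMk ⟨z, Finset.mem_coe.mpr hz⟩) with h2 | h2
      · exact Or.inl (hrev1 z hz h2)
      · exact Or.inr (hrev2 z hz h2)
    · rintro (hz | hz)
      · exact (hmem1 z hz).1
      · exact (hmem2 z hz).1
  have hself1 : a ∈ arc a p := by
    rw [mem_arc (by omega), sub_self, ZMod.val_zero]; omega
  have hself2 : a₂ ∈ arc a₂ q := by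
    rw [mem_arc (by omega), sub_self, ZMod.val_zero]; omega
  have hx12 : a₂ ∉ arc a p := by
    intro hcon
    obtain ⟨hz1, he1⟩ := hmem1 a₂ hcon
    obtain ⟨hz2, he2⟩ := hmem2 a₂ hself2
    exact hcne (he1 ▸ he2 ▸ rfl)
  have hx21 : a ∉ arc a₂ q := by
    intro hcon
    obtain ⟨hz1, he1⟩ := hmem1 a hself1
    obtain ⟨hz2, he2⟩ := hmem2 a hcon
    exact hcne (he1 ▸ he2 ▸ rfl)
  set w := (a₂ - a).val with hwdef
  set w' := (a - a₂).val with hw'def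
  have hw1 : p ≤ w := by
    by_contra hcon
    exact hx12 ((mem_arc (by omega)).mpr (by omega))
  have hw2 : q ≤ w' := by
    by_contra hcon
    exact hx21 ((mem_arc (by omega)).mpr (by omega))
  have hwlt : w < n := ZMod.val_lt _
  have hw'lt : w' < n := ZMod.val_lt _
  have hww : w + w' = n := by
    have hz : (a₂ - a) + (a - a₂) = 0 := by ring
    have hval := congrArg ZMod.val hz
    rw [ZMod.val_add, ZMod.val_zero] at hval
    rcases Nat.lt_or_ge (w + w') n with h2 | h2
    · rw [Nat.mod_eq_of_lt h2] at hval; omega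
    · rw [Nat.mod_eq_sub_mod h2, Nat.mod_eq_of_lt (by omega)] at hval; omega
  have hpw : p < w := by
    rcases Nat.lt_or_ge p w with h2 | h2
    · exact h2
    · exfalso
      have hcoord := coord a a₂
      have hpeq : p = w := by omega
      rw [← hwdef, ← hpeq] at hcoord
      exact hap (hcoord ▸ ha2A)
  have hqw : q < w' := by
    rcases Nat.lt_or_ge q w' with h2 | h2
    · exact h2
    · exfalso
      have hcoord := coord a₂ a
      have hqeq : q = w' := by omega
      rw [← hw'def, ← hqeq] at hcoord
      exact ha2q (hcoord ▸ haA)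
  refine ⟨a, p, w - p, q, w' - q, hp1, by omega, hq1, by omega, by omega, ?_, ?_, ?_⟩
  · have ha2eq : a₂ = a + (((p + (w - p) : ℕ)) : ZMod n) := by
      rw [show p + (w - p) = w by omega]
      exact hwdef ▸ coord a a₂
    rw [hAeq, ha2eq]
  · -- p + q = m
    have hdisj : Disjoint (arc a p) (arc a₂ q) := by
      rw [Finset.disjoint_left]
      intro z hz1 hz2
      have hzp : (z - a).val < p := (mem_arc (by omega)).mp hz1
      have ha2eq : a₂ = a + (((p + (w - p) : ℕ)) : ZMod n) := by
        rw [show p + (w - p) = w by omega]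
        exact hwdef ▸ coord a a₂
      rw [ha2eq] at hz2
      have := (mem_arc_shift (by omega)).mp hz2
      omega
    rw [hAeq, Finset.card_union_of_disjoint hdisj, card_arc a (by omega),
      card_arc a₂ (by omega)] at hcard
    exact hcard
  · -- size constraints
    have hnc1 : c₁.supp.ncard = p := by
      have := Set.ncard_image_of_injective c₁.supp (Subtype.val_injective (p := fun z => z ∈ (↑A : Set (ZMod n))))
      rw [hsupp1, Set.ncard_coe_finset, card_arc a (by omega)] at this
      omega
    have hnc2 : c₂.supp.ncard = q := by
      have := Set.ncard_image_of_injective c₂.supp (Subtype.val_injective (p := fun z => z ∈ (↑A : Set (ZMod n))))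
      rw [hsupp2, Set.ncard_coe_finset, card_arc a₂ (by omega)] at this
      omega
    rw [hnc1, hnc2] at hsz1 hsz2
    have hsum2 : p + (w - p) + q + (w' - q) = n := by omega
    have ha2eq : a₂ = a + (((p + (w - p) : ℕ)) : ZMod n) := by
      rw [show p + (w - p) = w by omega]
      exact hwdef ▸ coord a a₂
    have hA2 : A = arc a p ∪ arc (a + (((p + (w - p) : ℕ)) : ZMod n)) q := by
      rw [hAeq, ha2eq]
    have hC := compl_two_arc hp1 (by omega) hq1 (by omega) hsum2 hA2
    obtain ⟨e₁, e₂, hene, heall, hesz1, hesz2⟩ :=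
      two_arc_components (by omega) hq1 (by omega) hp1
        (show (w - p) + q + (w' - q) + p = n by omega) hC
    have hCcard : (Finset.univ \ A).card = n - m := by
      rw [Finset.card_sdiff_of_subset (Finset.subset_univ A), hcards, hcard]
    rcases hgC with h2 | h2 | ⟨d₁, d₂, hdne, hdall, hdsz1, hdsz2⟩
    · omega
    · omega
    have hgh : ((w - p : ℕ) : ℤ) - ((w' - q : ℕ) : ℤ) ≤ 1 ∧
        ((w' - q : ℕ) : ℤ) - ((w - p : ℕ) : ℤ) ≤ 1 := by
      rcases hdall e₁ with he1 | he1 <;> rcases hdall e₂ with he2 | he2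
      · exact absurd (he1.trans he2.symm) hene
      · rw [← he1, ← he2, hesz1, hesz2] at hdsz1 hdsz2
        exact ⟨hdsz1, hdsz2⟩
      · rw [← he1, ← he2, hesz1, hesz2] at hdsz1 hdsz2
        exact ⟨hdsz2, hdsz1⟩
      · exact absurd (he1.trans he2.symm) hene
    exact ⟨by omega, by omega, hgh.1, hgh.2⟩



lemma two_arc_good {A : Finset (ZMod n)} {a : ZMod n} {p g q h : ℕ}
    (hp : 1 ≤ p) (hg : 1 ≤ g) (hq : 1 ≤ q) (hh : 1 ≤ h) (hsum : p + g + q + h = n)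
    (hA : A = arc a p ∪ arc (a + ((p + g : ℕ) : ZMod n)) q)
    (hpq1 : (p : ℤ) - q ≤ 1) (hpq2 : (q : ℤ) - p ≤ 1)
    (hgh1 : (g : ℤ) - h ≤ 1) (hgh2 : (h : ℤ) - g ≤ 1) : GoodSet n A := by
  constructor
  · obtain ⟨c₁, c₂, hne, hall, h1, h2⟩ := two_arc_components hp hg hq hh hsum hA
    right; right
    exact ⟨c₁, c₂, hne, hall, by rw [h1, h2]; exact hpq1, by rw [h1, h2]; exact hpq2⟩
  · have hC := compl_two_arc hp hg hq hh hsum hA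
    obtain ⟨c₁, c₂, hne, hall, h1, h2⟩ := two_arc_components hg hq hh hp (by omega) hC
    right; right
    exact ⟨c₁, c₂, hne, hall, by rw [h1, h2]; exact hgh1, by rw [h1, h2]; exact hgh2⟩

lemma adj_add (c x y : ZMod n) :
    (cycleGraphZMod n).Adj (x + c) (y + c) ↔ (cycleGraphZMod n).Adj x y := by
  rw [cyc_adj, cyc_adj]
  constructor
  · rintro ⟨h1, h2 | h2⟩
    · exact ⟨fun hc => h1 (by rw [hc]), Or.inl (by linear_combination h2)⟩
    · exact ⟨fun hc => h1 (by rw [hc]), Or.inr (by linear_combination h2)⟩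
  · rintro ⟨h1, h2 | h2⟩
    · exact ⟨fun hc => h1 (add_right_cancel hc), Or.inl (by rw [h2]; ring)⟩
    · exact ⟨fun hc => h1 (add_right_cancel hc), Or.inr (by rw [h2]; ring)⟩

lemma adj_neg (x y : ZMod n) :
    (cycleGraphZMod n).Adj (-x) (-y) ↔ (cycleGraphZMod n).Adj x y := by
  rw [cyc_adj, cyc_adj]
  constructor
  · rintro ⟨h1, h2 | h2⟩
    · exact ⟨fun hc => h1 (by rw [hc]), Or.inr (by linear_combination h2)⟩
    · exact ⟨fun hc => h1 (by rw [hc]), Or.inl (by linear_combination h2)⟩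
  · rintro ⟨h1, h2 | h2⟩
    · exact ⟨fun hc => h1 (neg_injective hc), Or.inr (by rw [h2]; ring)⟩
    · exact ⟨fun hc => h1 (neg_injective hc), Or.inl (by rw [h2]; ring)⟩

def rotIso (c : ZMod n) : cycleGraphZMod n ≃g cycleGraphZMod n where
  toEquiv := Equiv.addRight c
  map_rel_iff' := @fun x y => adj_add c x y

def reflIso (c : ZMod n) : cycleGraphZMod n ≃g cycleGraphZMod n where
  toEquiv := (Equiv.neg (ZMod n)).trans (Equiv.addRight c)
  map_rel_iff' := @fun x y => by
    simp only [Equiv.trans_apply, Equiv.neg_apply, Equiv.coe_addRight]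
    rw [adj_add c (-x) (-y), adj_neg]

@[simp] lemma rotIso_apply (c x : ZMod n) : rotIso c x = x + c := rfl
@[simp] lemma reflIso_apply (c x : ZMod n) : reflIso c x = -x + c := rfl

lemma image_arc_add (c a : ZMod n) (l : ℕ) :
    (arc a l).image (fun x => x + c) = arc (a + c) l := by
  unfold arc
  rw [Finset.image_image]
  exact Finset.image_congr (fun i _ => by simp [Function.comp]; ring)

lemma image_arc_neg (a : ZMod n) {l : ℕ} (hl : 1 ≤ l) :
    (arc a l).image (fun x => -x) = arc (-a - ((l - 1 : ℕ) : ZMod n)) l := by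
  unfold arc
  rw [Finset.image_image]
  ext x
  simp only [Finset.mem_image, Finset.mem_range, Function.comp]
  constructor
  · rintro ⟨i, hi, rfl⟩
    refine ⟨l - 1 - i, by omega, ?_⟩
    rw [Nat.cast_sub (by omega : i ≤ l - 1)]
    ring
  · rintro ⟨j, hj, rfl⟩
    refine ⟨l - 1 - j, by omega, ?_⟩
    rw [Nat.cast_sub (by omega : j ≤ l - 1)]
    ring

lemma iso_form (hn3 : 3 ≤ n) (φ : cycleGraphZMod n ≃g cycleGraphZMod n) :
    (∀ x, φ x = φ 0 + x) ∨ (∀ x, φ x = φ 0 - x) := by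
  have hn2 : 2 ≤ n := by omega
  have h2ne : ((2 : ℕ) : ZMod n) ≠ 0 := by
    intro hcon
    have := Nat.le_of_dvd (by norm_num) ((CharP.cast_eq_zero_iff (ZMod n) n 2).mp hcon)
    omega
  have hadj : ∀ x : ZMod n, (cycleGraphZMod n).Adj x (x + 1) := by
    intro x
    rw [cyc_adj]
    exact ⟨fun hc => zmod_one_ne_zero hn2 (by linear_combination -hc), Or.inl rfl⟩
  have hstep : ∀ x : ZMod n, (cycleGraphZMod n).Adj (φ x) (φ (x + 1)) := fun x =>
    φ.map_rel_iff.mpr (hadj x)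
  have h01 := (cyc_adj.mp (by simpa using hstep 0)).2
  rcases h01 with hc | hc
  · left
    have key : ∀ i : ℕ, φ (i : ZMod n) = φ 0 + (i : ZMod n) ∧
        φ ((i + 1 : ℕ) : ZMod n) = φ 0 + ((i + 1 : ℕ) : ZMod n) := by
      intro i
      induction i with
      | zero =>
        refine ⟨by simp, ?_⟩
        simp only [Nat.cast_one, Nat.cast_ofNat, Nat.zero_add]
        push_cast
        exact hc
      | succ i ih =>
        refine ⟨ih.2, ?_⟩
        have hs := hstep ((i + 1 : ℕ) : ZMod n)
        rw [cyc_adj] at hs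
        have hcast : ((i + 1 : ℕ) : ZMod n) + 1 = ((i + 1 + 1 : ℕ) : ZMod n) := by
          push_cast; ring
        rw [hcast] at hs
        rcases hs.2 with h3 | h3
        · rw [h3, ih.2]; push_cast; ring
        · exfalso
          have h4 : φ ((i + 1 + 1 : ℕ) : ZMod n) = φ ((i : ℕ) : ZMod n) := by
            rw [ih.1]
            rw [ih.2] at h3
            push_cast at h3 ⊢
            linear_combination -h3
          have h5 := φ.injective h4
          apply h2ne
          push_cast at h5 ⊢
          linear_combination h5
    intro x
    have hx := (key x.val).1
    rwa [ZMod.natCast_rightInverse x] at hx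
  · right
    have hc' : φ 1 = φ 0 - 1 := by linear_combination -hc
    have key : ∀ i : ℕ, φ (i : ZMod n) = φ 0 - (i : ZMod n) ∧
        φ ((i + 1 : ℕ) : ZMod n) = φ 0 - ((i + 1 : ℕ) : ZMod n) := by
      intro i
      induction i with
      | zero =>
        refine ⟨by simp, ?_⟩
        simp only [Nat.zero_add]
        push_cast
        exact hc'
      | succ i ih =>
        refine ⟨ih.2, ?_⟩
        have hs := hstep ((i + 1 : ℕ) : ZMod n)
        rw [cyc_adj] at hs
        have hcast : ((i + 1 : ℕ) : ZMod n) + 1 = ((i + 1 + 1 : ℕ) : ZMod n) := by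
          push_cast; ring
        rw [hcast] at hs
        rcases hs.2 with h3 | h3
        · exfalso
          have h4 : φ ((i + 1 + 1 : ℕ) : ZMod n) = φ ((i : ℕ) : ZMod n) := by
            rw [ih.1]
            rw [ih.2] at h3
            push_cast at h3 ⊢
            linear_combination h3
          have h5 := φ.injective h4
          apply h2ne
          push_cast at h5 ⊢
          linear_combination h5
        · rw [ih.2] at h3
          push_cast at h3 ⊢
          linear_combination -h3
    intro x
    have hx := (key x.val).1
    rwa [ZMod.natCast_rightInverse x] at hx

lemma image_B_rot (c : ZMod n) (p g q : ℕ) :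
    Finset.image (fun x => rotIso c x) (arc (0 : ZMod n) p ∪
      arc ((0 : ZMod n) + ((p + g : ℕ) : ZMod n)) q)
    = arc c p ∪ arc (c + ((p + g : ℕ) : ZMod n)) q := by
  simp only [rotIso_apply]
  rw [Finset.image_union, image_arc_add, image_arc_add, zero_add]
  congr 1
  congr 1
  ring

lemma image_B_refl (c : ZMod n) (p g q : ℕ) (hp : 1 ≤ p) (hq : 1 ≤ q) :
    Finset.image (fun x => reflIso c x) (arc (0 : ZMod n) p ∪
      arc ((0 : ZMod n) + ((p + g : ℕ) : ZMod n)) q)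
    = arc (c - ((p - 1 : ℕ) : ZMod n)) p ∪
      arc (c - ((p + g : ℕ) : ZMod n) - ((q - 1 : ℕ) : ZMod n)) q := by
  simp only [reflIso_apply]
  have hcomp : (fun x : ZMod n => -x + c) = (fun y : ZMod n => y + c) ∘ (fun x : ZMod n => -x) :=
    rfl
  rw [hcomp, ← Finset.image_image, Finset.image_union, image_arc_neg 0 hp, image_arc_neg _ hq,
    Finset.image_union, image_arc_add, image_arc_add]
  congr 1
  · congr 1; ring
  · congr 1; ring

lemma B_def {m : ℕ} (h2 : m / 2 + (n / 2 - m / 2) = n / 2) :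
    ((Finset.range (m / 2)).image (fun i : ℕ => (i : ZMod n)) ∪
     (Finset.range ((m + 1) / 2)).image (fun i : ℕ => ((n / 2 + i : ℕ) : ZMod n)))
    = arc (0 : ZMod n) (m / 2) ∪
      arc ((0 : ZMod n) + (((m / 2 + (n / 2 - m / 2)) : ℕ) : ZMod n)) ((m + 1) / 2) := by
  congr 1
  · unfold arc
    exact Finset.image_congr (fun i _ => by simp)
  · unfold arc
    refine Finset.image_congr (fun i _ => ?_)
    rw [h2]
    push_cast
    ring


end AuxCycle

/-- For `n ≥ 4` and `2 ≤ m ≤ n − 2`, a set `A ⊆ V(C_n)` with `|A| = m` is good iff there is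
a graph automorphism `φ` of `C_n` with
`A = φ({0,…,⌊m/2⌋−1} ∪ {⌊n/2⌋,…,⌊n/2⌋+⌈m/2⌉−1})`. -/
theorem good_iff_automorphic_image (n m : ℕ) [NeZero n] (hn : 4 ≤ n)
    (hm2 : 2 ≤ m) (hmn : m ≤ n - 2) (A : Finset (ZMod n)) (hcard : A.card = m) :
    GoodSet n A ↔ ∃ φ : cycleGraphZMod n ≃g cycleGraphZMod n,
      A = Finset.image (fun x => φ x)
        ((Finset.range (m / 2)).image (fun i : ℕ => (i : ZMod n)) ∪
         (Finset.range ((m + 1) / 2)).image (fun i : ℕ => ((n / 2 + i : ℕ) : ZMod n))) := by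
  have hBeq := B_def (n := n) (m := m) (by omega)
  have hp₀ : 1 ≤ m / 2 := by omega
  have hq₀ : 1 ≤ (m + 1) / 2 := by omega
  have hg₀ : 1 ≤ n / 2 - m / 2 := by omega
  have hh₀ : 1 ≤ n - n / 2 - (m + 1) / 2 := by omega
  have hsum₀ : m / 2 + (n / 2 - m / 2) + (m + 1) / 2 + (n - n / 2 - (m + 1) / 2) = n := by omega
  constructor
  · intro hgood
    obtain ⟨a, p, g, q, h, hp, hg, hq, hh, hsum, hA, hpq, hz1, hz2, hz3, hz4⟩ :=
      good_structure hn hm2 hmn hcard hgood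
    rw [hBeq]
    have hcases1 : (p = m / 2 ∧ q = (m + 1) / 2) ∨ (p = (m + 1) / 2 ∧ q = m / 2) := by omega
    have hcases2 : (g = n / 2 - m / 2 ∧ h = n - n / 2 - (m + 1) / 2) ∨
        (g = n - n / 2 - (m + 1) / 2 ∧ h = n / 2 - m / 2) := by omega
    rcases hcases1 with ⟨hP, hQ⟩ | ⟨hP, hQ⟩ <;> rcases hcases2 with ⟨hG, hH⟩ | ⟨hG, hH⟩
    · -- (p₀, g₀, q₀, h₀) : rotation by a
      refine ⟨rotIso a, ?_⟩
      rw [image_B_rot, hA, hP, hQ, hG]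
    · -- (p₀, h₀, q₀, g₀) : reflection with c = a + (p₀ - 1)
      refine ⟨reflIso (a + ((m / 2 - 1 : ℕ) : ZMod n)), ?_⟩
      rw [image_B_refl _ _ _ _ hp₀ hq₀, hA, hP, hQ, hG]
      congr 1
      · congr 1
        rw [Nat.cast_sub (by omega : 1 ≤ m / 2)]
        push_cast
        ring
      · congr 1
        rw [show m / 2 + (n - n / 2 - (m + 1) / 2)
            = n - ((n / 2 - m / 2) + (m + 1) / 2) by omega,
          Nat.cast_sub (by omega : (n / 2 - m / 2) + (m + 1) / 2 ≤ n), ZMod.natCast_self]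
        rw [Nat.cast_sub (by omega : 1 ≤ m / 2), Nat.cast_sub (by omega : 1 ≤ (m + 1) / 2)]
        push_cast
        ring
    · -- (q₀, g₀, p₀, h₀) : reflection with c = a + (p₀ + g₀ + q₀ - 1)
      refine ⟨reflIso (a + ((m / 2 + (n / 2 - m / 2) + (m + 1) / 2 - 1 : ℕ) : ZMod n)), ?_⟩
      rw [image_B_refl _ _ _ _ hp₀ hq₀, hA, hP, hQ, hG, Finset.union_comm]
      congr 1
      · -- arc (a + ↑(q₀+g₀)) p₀ = arc (c - ↑(p₀-1)) p₀
        congr 1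
        rw [Nat.cast_sub (by omega : 1 ≤ m / 2),
          Nat.cast_sub (by omega : 1 ≤ m / 2 + (n / 2 - m / 2) + (m + 1) / 2)]
        push_cast
        ring
      · -- arc a q₀ = arc (c - ↑(p₀+g₀) - ↑(q₀-1)) q₀
        congr 1
        rw [Nat.cast_sub (by omega : 1 ≤ (m + 1) / 2),
          Nat.cast_sub (by omega : 1 ≤ m / 2 + (n / 2 - m / 2) + (m + 1) / 2)]
        push_cast
        ring
    · -- (q₀, h₀, p₀, g₀) : rotation by c = a + (q₀ + h₀)
      refine ⟨rotIso (a + (((m + 1) / 2 + (n - n / 2 - (m + 1) / 2) : ℕ) : ZMod n)), ?_⟩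
      rw [image_B_rot, hA, hP, hQ, hG, Finset.union_comm]
      congr 1
      congr 1
      rw [show ((m : ℕ) + 1) / 2 + (n - n / 2 - (m + 1) / 2) = n - (m / 2 + (n / 2 - m / 2))
          by omega,
        Nat.cast_sub (by omega : m / 2 + (n / 2 - m / 2) ≤ n), ZMod.natCast_self]
      ring
  · rintro ⟨φ, hA⟩
    rw [hBeq] at hA
    rcases iso_form (by omega) φ with hf | hf
    · rw [Finset.image_congr (g := fun x => rotIso (φ 0) x)
        (fun x _ => by rw [hf x]; show φ 0 + x = x + φ 0; ring), image_B_rot] at hA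
      exact two_arc_good hp₀ hg₀ hq₀ hh₀ hsum₀ hA (by omega) (by omega) (by omega) (by omega)
    · rw [Finset.image_congr (g := fun x => reflIso (φ 0) x)
        (fun x _ => by rw [hf x]; show φ 0 - x = -x + φ 0; ring),
        image_B_refl _ _ _ _ hp₀ hq₀] at hA
      have hanchor : (φ 0 - ((m / 2 + (n / 2 - m / 2) : ℕ) : ZMod n)
            - (((m + 1) / 2 - 1 : ℕ) : ZMod n))
          + ((((m + 1) / 2 + (n / 2 - m / 2) : ℕ)) : ZMod n)
          = φ 0 - ((m / 2 - 1 : ℕ) : ZMod n) := by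
        rw [Nat.cast_sub (by omega : 1 ≤ (m + 1) / 2), Nat.cast_sub (by omega : 1 ≤ m / 2)]
        push_cast
        ring
      rw [Finset.union_comm, ← hanchor] at hA
      exact two_arc_good hq₀ hg₀ hp₀ hh₀ (by omega) hA (by omega) (by omega) (by omega) (by omega)
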